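/- Let k ≥ 3, q ≥ 1, π ∈ 𝕊_{k−1}, and let C = {a₁ < a₂ < ⋯ < a_t} ⊆ {1,…,k} be an independent set of vertices of the graph G_π. Define D : W^π_{k,q} → ℤ^t by D(x) = (x_{a₁} − x_{a₁−1} − ε_{a₁}(π), …, x_{a_t} − x_{a_t−1} − ε_{a_t}(π)), with conventions x₀ = 0 and x_k = q−1. Then for any vector d = (d₁,…,d_t) of nonnegative integers with d₁ + ⋯ + d_t = m and m ≤ q − |S(π)| − 1, the number of x ∈ W^π_{k,q} with D(x) = d equals C(k+q−|S(π)|−t−2−m, k−t−1). -/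

import Mathlib

open Finset

attribute [local instance] Classical.propDecidable

noncomputable section

/-- `π` is a permutation of `{1,…,k-1}` given in one-line notation
(`π p` is the entry at position `p`), normalized to `0` outside `[1,k-1]`. -/
def OneLine (k : ℕ) (π : ℕ → ℕ) : Prop :=
  Set.BijOn π (Set.Icc 1 (k - 1)) (Set.Icc 1 (k - 1)) ∧
    ∀ p, p ∉ Set.Icc 1 (k - 1) → π p = 0

/-- The set `S(π)` of adjacent inversions of `π`:
those `i ∈ [1,k-2]` such that `i+1` appears before `i` in `π`. -/
def adjInvF (k : ℕ) (π : ℕ → ℕ) : Finset ℕ :=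
  (Finset.Icc 1 (k - 2)).filter fun i =>
    ∃ p ∈ Finset.Icc 1 (k - 1), ∃ r ∈ Finset.Icc 1 (k - 1),
      p < r ∧ π p = i + 1 ∧ π r = i

/-- `W^π_{k,q}`: weakly increasing `(k-1)`-tuples with entries in `[0,q-1]`
that are strictly increasing at every adjacent inversion of `π`
(vectors are functions `ℕ → ℕ` supported on `[1,k-1]`). -/
def W (k q : ℕ) (π : ℕ → ℕ) : Set (ℕ → ℕ) :=
  {v | (∀ i, i ∉ Finset.Icc 1 (k - 1) → v i = 0) ∧
       (∀ i ∈ Finset.Icc 1 (k - 1), v i ≤ q - 1) ∧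
       (∀ i, 1 ≤ i → i + 1 ≤ k - 1 → v i ≤ v (i + 1)) ∧
       (∀ i ∈ adjInvF k π, v i < v (i + 1))}

/-- `x + e_{π_a} + e_{π_{a+1}} + ⋯ + e_{π_{b-1}}`. -/
def shift (π : ℕ → ℕ) (a b : ℕ) (x : ℕ → ℕ) : ℕ → ℕ :=
  fun i => x i + if i ∈ (Finset.Icc a (b - 1)).image π then 1 else 0

/-- Adjacency in the graph `G^π_{k,q}`: one vertex is obtained from the other
by adding `e_{π_a} + ⋯ + e_{π_{b-1}}` for some `1 ≤ a < b ≤ k`. -/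
def AdjRel (k : ℕ) (π : ℕ → ℕ) (x y : ℕ → ℕ) : Prop :=
  ∃ a b, 1 ≤ a ∧ a < b ∧ b ≤ k ∧ (y = shift π a b x ∨ x = shift π a b y)

/-- The number of maximal blocks of consecutive integers of a finite set `T ⊆ ℕ`. -/
def numBlocks (T : Finset ℕ) : ℕ := (T.filter fun t => t + 1 ∉ T).card

/-- `cs_i(π)`: the number of pairs `1 ≤ a < b ≤ k` such that
`T_{a,b} = {π_a,…,π_{b-1}}` decomposes into exactly `i` maximal blocks
of consecutive integers. -/
def cs (k : ℕ) (π : ℕ → ℕ) (i : ℕ) : ℕ :=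
  ((Finset.Icc 1 k ×ˢ Finset.Icc 1 k).filter fun p =>
    p.1 < p.2 ∧ numBlocks ((Finset.Icc p.1 (p.2 - 1)).image π) = i).card

/-- For `i < j`, `{i,j}` is an edge of `G_π` iff `{i,i+1,…,j-1}` occurs as
a set of consecutive entries of `π`. -/
def GpiEdge (k : ℕ) (π : ℕ → ℕ) (i j : ℕ) : Prop :=
  ∃ a, 1 ≤ a ∧ a + (j - i) ≤ k ∧
    (Finset.Icc a (a + (j - i) - 1)).image π = Finset.Icc i (j - 1)

/-- Unordered adjacency in `G_π`. -/
def GpiAdjU (k : ℕ) (π : ℕ → ℕ) (i j : ℕ) : Prop :=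
  (i < j ∧ GpiEdge k π i j) ∨ (j < i ∧ GpiEdge k π j i)

/-- The position of the value `v` in the one-line notation of `π`. -/
def posOf (k : ℕ) (π : ℕ → ℕ) (v : ℕ) : ℕ :=
  if h : ((Finset.Icc 1 (k - 1)).filter fun t => π t = v).Nonempty then
    ((Finset.Icc 1 (k - 1)).filter fun t => π t = v).min' h
  else 0

/-- The rotation `r` on one-line permutations: if `π = π₁…π_{t-1}(k-1)π_{t+1}…π_{k-1}`,
then `r(π) = (π_{t+1}+1)…(π_{k-1}+1) 1 (π₁+1)…(π_{t-1}+1)`. -/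
def rot (k : ℕ) (π : ℕ → ℕ) : ℕ → ℕ := fun p =>
  if p ∉ Finset.Icc 1 (k - 1) then 0
  else if p < k - posOf k π (k - 1) then π (posOf k π (k - 1) + p) + 1
  else if p = k - posOf k π (k - 1) then 1
  else π (p - (k - posOf k π (k - 1))) + 1

/-- The reflection `s` on one-line permutations: if `π = π₁…π_{i-1} 1 π_{i+1}…π_{k-1}`,
then `s(π) = (k+1-π_{i-1})…(k+1-π₁) 1 (k+1-π_{k-1})…(k+1-π_{i+1})`. -/
def srefl (k : ℕ) (π : ℕ → ℕ) : ℕ → ℕ := fun p =>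
  if p ∉ Finset.Icc 1 (k - 1) then 0
  else if p < posOf k π 1 then k + 1 - π (posOf k π 1 - p)
  else if p = posOf k π 1 then 1
  else k + 1 - π (k + posOf k π 1 - p)

/-- The rotation `ρ` of the vertex set `{1,…,k}`. -/
def rotV (k i : ℕ) : ℕ := if i < k then i + 1 else 1

/-- The reflection `σ` of the vertex set `{1,…,k}`. -/
def sreflV (k i : ℕ) : ℕ := if i = 1 then 1 else k + 2 - i

/-- The maximal sorted family `(S₁,…,S_k)` associated with `σ`, `0`-indexed:
`sortedFam k σ (i-1) = S_i`. -/
def sortedFam (k : ℕ) (σ : ℕ → ℕ) : ℕ → Finset ℕ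
  | 0 => insert 1 ((adjInvF k σ).image (· + 1))
  | j + 1 => insert (σ (j + 1) + 1) ((sortedFam k σ j).erase (σ (j + 1)))

/-- `ear(π)`. -/
def ear (k : ℕ) (π : ℕ → ℕ) : ℕ :=
  ((Finset.Icc 1 (k - 2)).filter fun i => π (i + 1) = π i + 1 ∨ π i = π (i + 1) + 1).card
    + (({1, k - 1} : Finset ℕ) ∩ ({π 1, π (k - 1)} : Finset ℕ)).card

/-- `ε_i(π) = 1` if `i-1 ∈ S(π)` and `0` otherwise. -/
def eps (k : ℕ) (π : ℕ → ℕ) (i : ℕ) : ℕ := if i - 1 ∈ adjInvF k π then 1 else 0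

/-- Extension of a vector with the conventions `x_k = q-1` (`x₀ = 0` holds by
the normalization of vectors in `W^π_{k,q}`). -/
def xext (k q : ℕ) (x : ℕ → ℕ) (i : ℕ) : ℕ := if i = k then q - 1 else x i

/-- The label list `L^π(x) = {i ∈ [1,k] : x_{i-1} < x_i - ε_i(π)}`. -/
def labels (k q : ℕ) (π : ℕ → ℕ) (x : ℕ → ℕ) : Finset ℕ :=
  (Finset.Icc 1 k).filter fun i => xext k q x (i - 1) + eps k π i < xext k q x i

/-- A Sperner labeling of `G^π_{k,q}`. -/
def IsSperner (k q : ℕ) (π : ℕ → ℕ) (f : (ℕ → ℕ) → ℕ) : Prop :=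
  (∀ x ∈ W k q π, f x = 0 ∨ f x ∈ labels k q π x) ∧
  (∀ x ∈ W k q π, ∀ y ∈ W k q π, AdjRel k π x y → f x = f y ∨ f x = 0 ∨ f y = 0)

/-- The entry `w` appears between the entries `u` and `v` in `π`. -/
def Between (k : ℕ) (π : ℕ → ℕ) (u v w : ℕ) : Prop :=
  (posOf k π u < posOf k π w ∧ posOf k π w < posOf k π v) ∨
  (posOf k π v < posOf k π w ∧ posOf k π w < posOf k π u)

/-- A good set of colors for `π`. -/
def GoodSet (k : ℕ) (π : ℕ → ℕ) (C : Finset ℕ) : Prop :=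
  C ⊆ Finset.Icc 1 k ∧
  (∀ i ∈ C, ∀ j ∈ C, i ≠ j → ¬ GpiAdjU k π i j) ∧
  (∀ a ∈ C, ∀ b ∈ C, 1 < a → a < b → b < k →
      ((Between k π (a - 1) b a ∨ Between k π (a - 1) b (b - 1)) ∧
       (Between k π (b - 1) a (a - 1) ∨ Between k π (b - 1) a b))) ∧
  (1 ∈ C → ∀ b ∈ C, b ≠ 1 → Between k π 1 (b - 1) b) ∧
  (k ∈ C → ∀ b ∈ C, b ≠ k → Between k π b (k - 1) (b - 1))

/-- `x_a - x_{a-1} - ε_a(π)`, the `a`-th coordinate of the distance map `D`. -/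
def dval (k q : ℕ) (π : ℕ → ℕ) (x : ℕ → ℕ) (a : ℕ) : ℕ :=
  xext k q x a - xext k q x (a - 1) - eps k π a

/-- The distance coloring determined by a set of colors `C`:
`x` gets color `a ∈ C` if `dval x a` is the unique maximum of `dval x` on `C`,
and `0` otherwise. -/
def dcol (k q : ℕ) (π : ℕ → ℕ) (C : Finset ℕ) (x : ℕ → ℕ) : ℕ :=
  if h : ∃ a ∈ C, ∀ b ∈ C, b ≠ a → dval k q π x b < dval k q π x a then h.choose else 0

/-! Write `x_a = x_{a-1} + ε_a(π) + δ_a`: membership in `W^π_{k,q}` says exactly that the gaps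
`δ_a = D(x)_a` (`1 ≤ a ≤ k`) are nonnegative, and they determine `x`. Since the `ε_a` sum to `|S(π)|`,
`x ↦ δ` is a bijection from `W^π_{k,q}` onto the gap vectors of total `q - 1 - |S(π)|`. Prescribing the
gaps on `C` to be `d` leaves `k - t` free gaps of total `q - 1 - |S(π)| - m`, which stars and bars
counts. Every vertex of `G_π` is adjacent to its cyclic successor (`i ~ i + 1` and `k ~ 1`), so an
independent set has `2t ≤ k`, whence `t ≤ k - 2`; this also makes the binomial vanish when
`q ≤ |S(π)|`, where `W^π_{k,q}` is empty. -/

theorem Finset.card_piAntidiag_nat_eq_choose {ι : Type*} [DecidableEq ι] (s : Finset ι) (n : ℕ) :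
    #(s.piAntidiag n) = (#s + n - 1).choose n := by
  rw [← card_finsuppAntidiag_nat_eq_choose, finsuppAntidiag, card_map, card_attach]

section Gaps

variable {k q : ℕ} {π x y δ : ℕ → ℕ}

lemma adjInvF_subset_Icc : adjInvF k π ⊆ Icc 1 (k - 2) := by
  intro i hi
  simp only [adjInvF, mem_filter] at hi
  exact hi.1

lemma eps_one : eps k π 1 = 0 := by
  have : 0 ∉ adjInvF k π := fun h => by simpa using adjInvF_subset_Icc h
  simp [eps, this]

lemma eps_self : eps k π k = 0 := by
  have : k - 1 ∉ adjInvF k π := fun h => by have := mem_Icc.mp (adjInvF_subset_Icc h); omega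
  simp [eps, this]

lemma sum_eps : ∑ a ∈ Icc 1 k, eps k π a = #(adjInvF k π) := by
  have hsub : (adjInvF k π).image (· + 1) ⊆ Icc 1 k := by
    simp only [image_subset_iff, mem_Icc]
    intro i hi
    have := mem_Icc.mp (adjInvF_subset_Icc hi)
    omega
  have heps : ∀ a ∈ Icc 1 k, eps k π a = if a ∈ (adjInvF k π).image (· + 1) then 1 else 0 := by
    intro a ha
    have ha : 1 ≤ a := (mem_Icc.mp ha).1
    have : a ∈ (adjInvF k π).image (· + 1) ↔ a - 1 ∈ adjInvF k π :=
      ⟨fun h => by obtain ⟨b, hb, rfl⟩ := mem_image.mp h; simpa using hb,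
        fun h => mem_image.mpr ⟨a - 1, h, by omega⟩⟩
    simp only [eps, this]
  rw [sum_congr rfl heps, sum_boole, filter_mem_eq_inter, inter_eq_right.mpr hsub,
    card_image_of_injective _ (add_left_injective 1), Nat.cast_id]

lemma xext_sub_one_add_eps_le (hx : x ∈ W k q π) {a : ℕ} (ha : a ∈ Icc 1 k) :
    xext k q x (a - 1) + eps k π a ≤ xext k q x a := by
  obtain ⟨hx0, hxq, hxmono, hxS⟩ := hx
  obtain ⟨ha1, hak⟩ := mem_Icc.mp ha
  have hprev : xext k q x (a - 1) = x (a - 1) := if_neg (by omega)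
  rcases hak.lt_or_eq with hak | rfl
  · have hcur : xext k q x a = x a := if_neg hak.ne
    rw [hprev, hcur]
    rcases ha1.lt_or_eq with ha1 | rfl
    · have hstep : a - 1 + 1 = a := by omega
      by_cases hS : a - 1 ∈ adjInvF k π
      · simpa [eps, hS, hstep, Nat.succ_le_iff] using hxS _ hS
      · simpa [eps, hS, hstep] using hxmono (a - 1) (by omega) (by omega)
    · simp [eps_one, hx0 0 (by simp)]
  · have hlast : x (a - 1) ≤ q - 1 := by
      by_cases h : a - 1 ∈ Icc 1 (a - 1)
      · exact hxq _ h
      · simp [hx0 _ h]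
    rw [hprev, eps_self, add_zero, xext, if_pos rfl]
    exact hlast

def gapSum (k : ℕ) (π δ : ℕ → ℕ) (j : ℕ) : ℕ := ∑ a ∈ Icc 1 j, (eps k π a + δ a)

lemma gapSum_zero : gapSum k π δ 0 = 0 := by simp [gapSum]

lemma gapSum_succ (j : ℕ) :
    gapSum k π δ (j + 1) = gapSum k π δ j + (eps k π (j + 1) + δ (j + 1)) :=
  sum_Icc_succ_top (by omega) _

lemma gapSum_mono : Monotone (gapSum k π δ) :=
  fun _ _ hij => sum_le_sum_of_subset (Icc_subset_Icc_right hij)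

lemma xext_eq_gapSum_dval (hk : 1 ≤ k) (hx : x ∈ W k q π) {j : ℕ} (hj : j ≤ k) :
    xext k q x j = gapSum k π (dval k q π x) j := by
  induction j with
  | zero => simpa [xext, gapSum_zero, show 0 ≠ k by omega] using hx.1 0 (by simp)
  | succ j ih =>
    have hle := xext_sub_one_add_eps_le hx (a := j + 1) (mem_Icc.mpr ⟨by omega, hj⟩)
    rw [gapSum_succ, ← ih (by omega)]
    simp only [dval, Nat.add_sub_cancel] at hle ⊢
    omega

lemma card_adjInvF_add_sum_dval (hk : 1 ≤ k) (hx : x ∈ W k q π) :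
    #(adjInvF k π) + ∑ a ∈ Icc 1 k, dval k q π x a = q - 1 := by
  have h := xext_eq_gapSum_dval hk hx le_rfl
  rwa [gapSum, sum_add_distrib, sum_eps, xext, if_pos rfl, eq_comm] at h

lemma eq_of_dval_eq (hx : x ∈ W k q π) (hy : y ∈ W k q π)
    (h : ∀ a ∈ Icc 1 k, dval k q π x a = dval k q π y a) : x = y := by
  funext i
  by_cases hi : i ∈ Icc 1 (k - 1)
  · have hik : i ≤ k := by have := mem_Icc.mp hi; omega
    have hsum : gapSum k π (dval k q π x) i = gapSum k π (dval k q π y) i :=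
      sum_congr rfl fun a ha => by rw [h a (Icc_subset_Icc_right hik ha)]
    have hne : i ≠ k := by have := mem_Icc.mp hi; omega
    simpa [← xext_eq_gapSum_dval (by omega) hx hik, ← xext_eq_gapSum_dval (by omega) hy hik, xext,
      hne] using hsum
  · rw [hx.1 i hi, hy.1 i hi]

def ofGaps (k : ℕ) (π δ : ℕ → ℕ) (i : ℕ) : ℕ := if i ∈ Icc 1 (k - 1) then gapSum k π δ i else 0

variable (hδ : #(adjInvF k π) + ∑ a ∈ Icc 1 k, δ a = q - 1)
include hδ

lemma gapSum_self : gapSum k π δ k = q - 1 := by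
  rw [← hδ, gapSum, sum_add_distrib, sum_eps]

lemma xext_ofGaps {j : ℕ} (hj : j ≤ k) : xext k q (ofGaps k π δ) j = gapSum k π δ j := by
  rcases hj.lt_or_eq with hj | rfl
  · rcases j.eq_zero_or_pos with rfl | hj0
    · simp [xext, ofGaps, hj.ne, gapSum_zero]
    · simp [xext, ofGaps, hj.ne, show j ≤ k - 1 by omega, show 1 ≤ j by omega]
  · simp [xext, gapSum_self hδ]

lemma ofGaps_mem_W : ofGaps k π δ ∈ W k q π := by
  refine ⟨fun i hi => if_neg hi, fun i hi => ?_, fun i hi1 hi2 => ?_, fun i hi => ?_⟩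
  · rw [ofGaps, if_pos hi, ← gapSum_self hδ]
    exact gapSum_mono (by have := mem_Icc.mp hi; omega)
  · rw [ofGaps, ofGaps, if_pos (mem_Icc.mpr ⟨hi1, by omega⟩), if_pos (mem_Icc.mpr ⟨by omega, hi2⟩)]
    exact gapSum_mono (Nat.le_succ i)
  · have := mem_Icc.mp (adjInvF_subset_Icc hi)
    rw [ofGaps, ofGaps, if_pos (mem_Icc.mpr ⟨by omega, by omega⟩),
      if_pos (mem_Icc.mpr ⟨by omega, by omega⟩), gapSum_succ]
    have heps : eps k π (i + 1) = 1 := by simp [eps, hi]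
    omega

lemma dval_ofGaps {a : ℕ} (ha : a ∈ Icc 1 k) : dval k q π (ofGaps k π δ) a = δ a := by
  obtain ⟨ha1, hak⟩ := mem_Icc.mp ha
  obtain ⟨j, rfl⟩ : ∃ j, a = j + 1 := ⟨a - 1, by omega⟩
  rw [dval, xext_ofGaps hδ hak, Nat.add_sub_cancel, xext_ofGaps hδ (by omega), gapSum_succ]
  omega

omit hδ

lemma ncard_dval_fiber (hk : 1 ≤ k) {C : Finset ℕ} (hC : C ⊆ Icc 1 k) {d : ℕ → ℕ} {m : ℕ}
    (hd : ∑ a ∈ C, d a = m) (hm : #(adjInvF k π) + m ≤ q - 1) :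
    {x | x ∈ W k q π ∧ ∀ a ∈ C, dval k q π x a = d a}.ncard
      = #((Icc 1 k \ C).piAntidiag (q - 1 - #(adjInvF k π) - m)) := by
  rw [← Set.ncard_coe_finset]
  refine Set.ncard_congr (fun x _ => (Icc 1 k \ C).piecewise (dval k q π x) 0) ?_ ?_ ?_
  · rintro x ⟨hxW, hxC⟩
    have hsplit := sum_sdiff hC (f := dval k q π x)
    rw [sum_congr rfl hxC, hd] at hsplit
    have htotal := card_adjInvF_add_sum_dval hk hxW
    refine mem_piAntidiag.mpr ⟨?_, fun a ha => ?_⟩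
    · rw [sum_piecewise, inter_self, sdiff_self, bot_eq_empty, sum_empty, add_zero]
      omega
    · by_contra hnot
      exact ha (piecewise_eq_of_notMem _ _ _ hnot)
  · rintro x y ⟨hxW, hxC⟩ ⟨hyW, hyC⟩ hxy
    refine eq_of_dval_eq hxW hyW fun a ha => ?_
    by_cases haC : a ∈ C
    · rw [hxC a haC, hyC a haC]
    · simpa [piecewise, ha, haC] using congrFun hxy a
  · intro e he
    obtain ⟨hesum, hesupp⟩ := mem_piAntidiag.mp he
    have hδ : #(adjInvF k π) + ∑ a ∈ Icc 1 k, C.piecewise d e a = q - 1 := by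
      rw [sum_piecewise, inter_eq_right.mpr hC, hd, hesum]
      omega
    refine ⟨ofGaps k π (C.piecewise d e), ⟨ofGaps_mem_W hδ, fun a ha => ?_⟩, funext fun a => ?_⟩
    · rw [dval_ofGaps hδ (hC ha), piecewise_eq_of_mem _ _ _ ha]
    · by_cases ha : a ∈ Icc 1 k \ C
      · obtain ⟨haI, haC⟩ := mem_sdiff.mp ha
        rw [piecewise_eq_of_mem _ _ _ ha, dval_ofGaps hδ haI, piecewise_eq_of_notMem _ _ _ haC]
      · rw [piecewise_eq_of_notMem _ _ _ ha, Pi.zero_apply]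
        by_contra hne
        exact ha (hesupp a (Ne.symm hne))

end Gaps

section Independent

variable {k : ℕ} {π : ℕ → ℕ}

lemma gpiEdge_succ (hπ : OneLine k π) {i : ℕ} (hi : i ∈ Icc 1 (k - 1)) :
    GpiEdge k π i (i + 1) := by
  obtain ⟨a, ha, hπa⟩ := hπ.1.2.2 (by simpa using hi)
  obtain ⟨ha1, hak⟩ := Set.mem_Icc.mp ha
  exact ⟨a, ha1, by omega, by simp [hπa]⟩

lemma gpiEdge_one_self (hπ : OneLine k π) (hk : 1 ≤ k) : GpiEdge k π 1 k := by
  refine ⟨1, le_rfl, by omega, ?_⟩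
  rw [show 1 + (k - 1) - 1 = k - 1 by omega, ← coe_inj, coe_image, coe_Icc]
  exact hπ.1.image_eq

lemma gpiAdjU_rotV (hπ : OneLine k π) (hk : 2 ≤ k) {i : ℕ} (hi : i ∈ Icc 1 k) :
    i ≠ rotV k i ∧ GpiAdjU k π i (rotV k i) := by
  obtain ⟨hi1, hik⟩ := mem_Icc.mp hi
  rcases hik.lt_or_eq with hik | rfl
  · rw [rotV, if_pos hik]
    exact ⟨by omega, .inl ⟨by omega, gpiEdge_succ hπ (mem_Icc.mpr ⟨hi1, by omega⟩)⟩⟩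
  · rw [rotV, if_neg (lt_irrefl _)]
    exact ⟨by omega, .inr ⟨by omega, gpiEdge_one_self hπ hi1⟩⟩

lemma two_mul_card_le_of_independent (hπ : OneLine k π) (hk : 2 ≤ k) {C : Finset ℕ}
    (hC : C ⊆ Icc 1 k) (hCind : ∀ i ∈ C, ∀ j ∈ C, i ≠ j → ¬ GpiAdjU k π i j) :
    2 * #C ≤ k := by
  have hinj : Set.InjOn (rotV k) C := fun i hi j hj hij => by
    have := mem_Icc.mp (hC hi); have := mem_Icc.mp (hC hj)
    simp only [rotV] at hij
    split_ifs at hij <;> omega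
  have hdisj : Disjoint C (C.image (rotV k)) := disjoint_left.mpr fun j hj hjr => by
    obtain ⟨i, hi, rfl⟩ := mem_image.mp hjr
    exact hCind i hi _ hj (gpiAdjU_rotV hπ hk (hC hi)).1 (gpiAdjU_rotV hπ hk (hC hi)).2
  have hsub : C ∪ C.image (rotV k) ⊆ Icc 1 k := union_subset hC <| image_subset_iff.mpr
    fun i hi => by have := mem_Icc.mp (hC hi); simp only [rotV, mem_Icc]; split_ifs <;> omega
  have := card_le_card hsub
  rw [card_union_of_disjoint hdisj, card_image_of_injOn hinj, Nat.card_Icc] at this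
  omega

end Independent

theorem stmt16 (k q : ℕ) (hk : 3 ≤ k) (hq : 1 ≤ q) (π : ℕ → ℕ) (hπ : OneLine k π)
    (C : Finset ℕ) (hCsub : C ⊆ Finset.Icc 1 k)
    (hCind : ∀ i ∈ C, ∀ j ∈ C, i ≠ j → ¬ GpiAdjU k π i j)
    (d : ℕ → ℕ) (m : ℕ) (hd : ∑ a ∈ C, d a = m)
    (hm : m ≤ q - (adjInvF k π).card - 1) :
    {x | x ∈ W k q π ∧ ∀ a ∈ C, dval k q π x a = d a}.ncard
      = Nat.choose (k + q - (adjInvF k π).card - C.card - 2 - m) (k - C.card - 1) := by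
  have hC := two_mul_card_le_of_independent hπ (by omega) hCsub hCind
  rcases le_or_gt q #(adjInvF k π) with hqS | hqS
  · have hempty : {x | x ∈ W k q π ∧ ∀ a ∈ C, dval k q π x a = d a} = ∅ :=
      Set.eq_empty_of_forall_notMem fun x hx => by
        have := card_adjInvF_add_sum_dval (by omega) hx.1
        omega
    rw [hempty, Set.ncard_empty, Nat.choose_eq_zero_of_lt (by omega)]
  · rw [ncard_dval_fiber (by omega) hCsub hd (by omega), card_piAntidiag_nat_eq_choose,
      card_sdiff_of_subset hCsub, Nat.card_Icc]
    rw [show k + 1 - 1 - #C + (q - 1 - #(adjInvF k π) - m) - 1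
        = k + q - #(adjInvF k π) - #C - 2 - m by omega]
    exact Nat.choose_symm_of_eq_add (by omega)

end
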